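/- arXiv:2105.09708 — 2 statements merged into one kernel-verified Lean document; each statement's English description precedes it below -/
import Mathlib

section
/- Let (X,T) be a topological dynamical system such that there exist a compact metric space Y and continuous surjections R: X → Y and S: Y → X with T = S ∘ R. Then dim(X̃_T) ≤ dim Y. -/
/-!
A point `z` of the natural extension of `T = S ∘ R` is determined on its first `N` coordinates
by `R (z N)`, since `z i = T^[N - 1 - i] (S (R (z N)))`. By compactness, every finite open cover
`α` of the natural extension is refined by a cover that only depends on finitely many, say the
first `N`, coordinates, hence by the pullback of a finite open cover `β` of `Y` along the continuous
map `z ↦ R (z N)`. Pulling back does not increase the order of a cover, so `D(α) ≤ D(β) ≤ dim Y`.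
-/

open scoped ENNReal Classical

section MeanDimDefs

variable {X : Type*}

/-- A finite open cover of `X`. -/
def IsFinOpenCover [TopologicalSpace X] (α : Finset (Set X)) : Prop :=
  (∀ A ∈ α, IsOpen A) ∧ ⋃₀ (α : Set (Set X)) = Set.univ

/-- `β` refines `α`: every element of `β` is contained in some element of `α`. -/
def Refines (β α : Finset (Set X)) : Prop :=
  ∀ B ∈ β, ∃ A ∈ α, B ⊆ A

/-- The order of a finite cover: `sup_x (Σ_A 1_A(x)) - 1`. -/
noncomputable def ordCover (α : Finset (Set X)) : ℕ :=
  (⨆ x : X, (α.filter fun A => x ∈ A).card) - 1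

/-- `D(α)`: the minimal order of a finite open cover refining `α`. -/
noncomputable def Dcover [TopologicalSpace X] (α : Finset (Set X)) : ℕ :=
  sInf {n | ∃ β : Finset (Set X), IsFinOpenCover β ∧ Refines β α ∧ ordCover β = n}

/-- The joint `α ∨ β = {U ∩ V : U ∈ α, V ∈ β}`. -/
noncomputable def jointCover (α β : Finset (Set X)) : Finset (Set X) :=
  (α ×ˢ β).image fun p => p.1 ∩ p.2

/-- The preimage cover `T⁻¹ α`. -/
noncomputable def preimCover (T : X → X) (α : Finset (Set X)) : Finset (Set X) :=
  α.image fun A => T ⁻¹' A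

/-- `dynCover T α n = ⋁_{i=0}^{n} T^{-i} α`. -/
noncomputable def dynCover (T : X → X) (α : Finset (Set X)) : ℕ → Finset (Set X)
  | 0 => α
  | n + 1 => jointCover α (preimCover T (dynCover T α n))

/-- Mean dimension relative to a cover:
`mdim(X,T,α) = lim_n D(⋁_{i=0}^{n-1} T^{-i}α)/n = inf_n D(⋁_{i=0}^{n-1} T^{-i}α)/n`. -/
noncomputable def mdimCover [TopologicalSpace X] (T : X → X) (α : Finset (Set X)) : ℝ≥0∞ :=
  ⨅ n : ℕ, (Dcover (dynCover T α n) : ℝ≥0∞) / (n + 1)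

/-- Mean topological dimension. -/
noncomputable def mdim (X : Type*) [TopologicalSpace X] (T : X → X) : ℝ≥0∞ :=
  ⨆ (α : Finset (Set X)) (_ : IsFinOpenCover α), mdimCover T α

/-- Topological (covering) dimension, `dim X = sup_α D(α)`. -/
noncomputable def covDim (X : Type*) [TopologicalSpace X] : ℝ≥0∞ :=
  ⨆ (α : Finset (Set X)) (_ : IsFinOpenCover α), (Dcover α : ℝ≥0∞)

/-- Stable topological dimension `stabdim X = lim_n dim(X^n)/n = inf_n dim(X^n)/n`. -/
noncomputable def stabdim (X : Type*) [TopologicalSpace X] : ℝ≥0∞ :=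
  ⨅ n : ℕ, covDim (Fin (n + 1) → X) / ((n : ℝ≥0∞) + 1)

end MeanDimDefs
section NatExtDefs

variable {X : Type*}

/-- The natural extension space `X̃_T ⊆ X^ℕ`. -/
def natExtSet (T : X → X) : Set (ℕ → X) := {x | ∀ k, T (x (k + 1)) = x k}

/-- The natural extension map `T̃ : (x_k)_k ↦ (T x_0, x_0, x_1, …)`. -/
def natExtMap (T : X → X) : ↥(natExtSet T) → ↥(natExtSet T) := fun x =>
  ⟨fun k => Nat.rec (T (x.1 0)) (fun k _ => x.1 k) k, by
    intro k
    cases k with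
    | zero => rfl
    | succ k => exact x.2 k⟩

end NatExtDefs

section Covers

variable {Z Y : Type*}

theorem Refines.refl (α : Finset (Set Z)) : Refines α α :=
  fun A hA => ⟨A, hA, subset_rfl⟩

theorem Refines.trans {γ β α : Finset (Set Z)} (hγβ : Refines γ β) (hβα : Refines β α) :
    Refines γ α := by
  intro C hC
  obtain ⟨B, hB, hCB⟩ := hγβ C hC
  obtain ⟨A, hA, hBA⟩ := hβα B hB
  exact ⟨A, hA, hCB.trans hBA⟩

theorem Refines.preimage {γ β : Finset (Set Y)} (h : Refines γ β) (f : Z → Y) :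
    Refines (γ.image (f ⁻¹' ·)) (β.image (f ⁻¹' ·)) := by
  simp only [Refines, Finset.mem_image, forall_exists_index, and_imp, forall_apply_eq_imp_iff₂,
    exists_exists_and_eq_and]
  intro C hC
  obtain ⟨B, hB, hCB⟩ := h C hC
  exact ⟨B, hB, Set.preimage_mono hCB⟩

theorem ordCover_preimage_le (β : Finset (Set Y)) (f : Z → Y) :
    ordCover (β.image (f ⁻¹' ·)) ≤ ordCover β := by
  refine Nat.sub_le_sub_right (ciSup_le' fun z => ?_) 1
  have hbdd : BddAbove (Set.range fun y : Y => (β.filter (y ∈ ·)).card) :=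
    ⟨β.card, Set.forall_mem_range.mpr fun y => Finset.card_filter_le _ _⟩
  calc ((β.image (f ⁻¹' ·)).filter (z ∈ ·)).card
      ≤ ((β.filter (f z ∈ ·)).image (f ⁻¹' ·)).card := by
        refine Finset.card_le_card fun A hA => ?_
        simp only [Finset.mem_filter, Finset.mem_image] at hA ⊢
        obtain ⟨⟨V, hV, rfl⟩, hz⟩ := hA
        exact ⟨V, ⟨hV, hz⟩, rfl⟩
    _ ≤ (β.filter (f z ∈ ·)).card := Finset.card_image_le
    _ ≤ ⨆ y : Y, (β.filter (y ∈ ·)).card := le_ciSup hbdd (f z)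

variable [TopologicalSpace Z] [TopologicalSpace Y]

theorem IsFinOpenCover.preimage {β : Finset (Set Y)} (hβ : IsFinOpenCover β) {f : Z → Y}
    (hf : Continuous f) : IsFinOpenCover (β.image (f ⁻¹' ·)) := by
  refine ⟨?_, ?_⟩
  · simp only [Finset.mem_image, forall_exists_index, and_imp, forall_apply_eq_imp_iff₂]
    exact fun V hV => (hβ.1 V hV).preimage hf
  · rw [Finset.coe_image, Set.sUnion_image, ← Set.preimage_iUnion₂, ← Set.sUnion_eq_biUnion,
      hβ.2, Set.preimage_univ]

theorem IsFinOpenCover.nonempty [Nonempty Z] {α : Finset (Set Z)} (hα : IsFinOpenCover α) :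
    α.Nonempty := by
  obtain ⟨A, hA, -⟩ := Set.mem_sUnion.mp (hα.2 ▸ Set.mem_univ (Classical.arbitrary Z))
  exact ⟨A, hA⟩

theorem exists_refines_ordCover_eq_Dcover {β : Finset (Set Z)} (hβ : IsFinOpenCover β) :
    ∃ γ, IsFinOpenCover γ ∧ Refines γ β ∧ ordCover γ = Dcover β :=
  Nat.sInf_mem (s := {n | ∃ γ, IsFinOpenCover γ ∧ Refines γ β ∧ ordCover γ = n})
    ⟨ordCover β, β, hβ, Refines.refl β, rfl⟩

theorem Dcover_le_of_refines {β α : Finset (Set Z)} (hβ : IsFinOpenCover β)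
    (hβα : Refines β α) : Dcover α ≤ Dcover β := by
  obtain ⟨γ, hγ, hγβ, hord⟩ := exists_refines_ordCover_eq_Dcover hβ
  exact hord ▸ Nat.sInf_le ⟨γ, hγ, hγβ.trans hβα, rfl⟩

theorem Dcover_preimage_le {f : Z → Y} (hf : Continuous f) {β : Finset (Set Y)}
    (hβ : IsFinOpenCover β) : Dcover (β.image (f ⁻¹' ·)) ≤ Dcover β := by
  obtain ⟨γ, hγ, hγβ, hord⟩ := exists_refines_ordCover_eq_Dcover hβ
  calc Dcover (β.image (f ⁻¹' ·))
      ≤ ordCover (γ.image (f ⁻¹' ·)) := Nat.sInf_le ⟨_, hγ.preimage hf, hγβ.preimage f, rfl⟩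
    _ ≤ ordCover γ := ordCover_preimage_le γ f
    _ = Dcover β := hord

theorem covDim_le_of_forall_preimage_refines
    (h : ∀ α : Finset (Set Z), IsFinOpenCover α → ∃ f : Z → Y, Continuous f ∧
      ∃ β, IsFinOpenCover β ∧ Refines (β.image (f ⁻¹' ·)) α) :
    covDim Z ≤ covDim Y := by
  refine iSup₂_le fun α hα => ?_
  obtain ⟨f, hf, β, hβ, hβα⟩ := h α hα
  have hD : Dcover α ≤ Dcover β :=
    (Dcover_le_of_refines (hβ.preimage hf) hβα).trans (Dcover_preimage_le hf hβ)
  exact le_iSup₂_of_le β hβ (Nat.cast_le.mpr hD)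

theorem covDim_eq_zero_of_isEmpty [IsEmpty Z] : covDim Z = 0 := by
  have hD (α : Finset (Set Z)) : Dcover α = 0 := by
    refine Nat.sInf_eq_zero.mpr (.inl ⟨∅, ⟨by simp, Set.eq_univ_of_forall isEmptyElim⟩, ?_, ?_⟩)
    · simp [Refines]
    · simp [ordCover, ciSup_of_empty]
  simp [covDim, hD]

theorem exists_isFinOpenCover_preimage_refines {P : Type*} [TopologicalSpace P] [CompactSpace Z]
    [T2Space Y] {f : Z → Y} (hf : Continuous f) {g : Y → P} (hg : Continuous g)
    {α : Finset (Set Z)} (hα : α.Nonempty) {γ : Finset (Set P)} (hγ : ∀ C ∈ γ, IsOpen C)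
    (hcov : ∀ z, ∃ C ∈ γ, (g ∘ f) z ∈ C) (hγα : Refines (γ.image ((g ∘ f) ⁻¹' ·)) α) :
    ∃ β, IsFinOpenCover β ∧ Refines (β.image (f ⁻¹' ·)) α := by
  refine ⟨insert (Set.range f)ᶜ (γ.image (g ⁻¹' ·)), ⟨?_, ?_⟩, ?_⟩
  · simp only [Finset.mem_insert, forall_eq_or_imp, isOpen_compl_iff, Finset.mem_image,
      forall_exists_index, and_imp, forall_apply_eq_imp_iff₂]
    exact ⟨(isCompact_range hf).isClosed, fun C hC => (hγ C hC).preimage hg⟩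
  · refine Set.eq_univ_of_forall fun y => ?_
    by_cases hy : y ∈ Set.range f
    · obtain ⟨z, rfl⟩ := hy
      obtain ⟨C, hC, hzC⟩ := hcov z
      exact ⟨g ⁻¹' C, Finset.mem_coe.mpr (Finset.mem_insert_of_mem (Finset.mem_image_of_mem _ hC)),
        hzC⟩
    · exact ⟨(Set.range f)ᶜ, Finset.mem_coe.mpr (Finset.mem_insert_self _ _), hy⟩
  · rw [Finset.image_insert, Finset.image_image, Set.preimage_compl, Set.preimage_range,
      Set.compl_univ]
    intro B hB
    rcases Finset.mem_insert.mp hB with rfl | hB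
    · exact ⟨hα.choose, hα.choose_spec, Set.empty_subset _⟩
    · exact hγα B hB

end Covers

section Cylinders

variable {X : Type*}

theorem exists_finset_pi_subset_of_isOpen [TopologicalSpace X] {ι : Type*} {s : Set (ι → X)}
    {A : Set s} (hA : IsOpen A) {z : s} (hz : z ∈ A) :
    ∃ (I : Finset ι) (u : ι → Set X), (∀ k ∈ I, IsOpen (u k) ∧ z.1 k ∈ u k) ∧
      Subtype.val ⁻¹' (I : Set ι).pi u ⊆ A := by
  obtain ⟨A', hA', rfl⟩ := isOpen_induced_iff.mp hA
  obtain ⟨I, u, hu, hsub⟩ := isOpen_pi_iff.mp hA' z.1 hz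
  exact ⟨I, u, hu, Set.preimage_mono hsub⟩

theorem pi_finset_eq_preimage_comp_val {N : ℕ} {I : Finset ℕ} (hI : ∀ k ∈ I, k < N)
    (u : ℕ → Set X) :
    (I : Set ℕ).pi u = (· ∘ Fin.val) ⁻¹' Set.pi {i : Fin N | ↑i ∈ I} (fun i => u i) := by
  ext x
  simp only [Set.mem_pi, Finset.mem_coe, Set.mem_preimage, Set.mem_ofPred_eq, Function.comp_apply]
  exact ⟨fun h i hi => h i hi, fun h k hk => h ⟨k, hI k hk⟩ hk⟩

theorem exists_refines_preimage_comp_val [TopologicalSpace X] {s : Set (ℕ → X)}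
    [CompactSpace s] {α : Finset (Set s)} (hα : IsFinOpenCover α) :
    ∃ (N : ℕ) (γ : Finset (Set (Fin N → X))), (∀ C ∈ γ, IsOpen C) ∧
      (∀ z : s, ∃ C ∈ γ, z.1 ∘ Fin.val ∈ C) ∧
      Refines (γ.image ((fun z : s => z.1 ∘ Fin.val) ⁻¹' ·)) α := by
  have hloc (z : s) : ∃ A ∈ α, ∃ (I : Finset ℕ) (u : ℕ → Set X),
      (∀ k ∈ I, IsOpen (u k) ∧ z.1 k ∈ u k) ∧ Subtype.val ⁻¹' (I : Set ℕ).pi u ⊆ A := by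
    obtain ⟨A, hA, hzA⟩ := Set.mem_sUnion.mp (hα.2 ▸ Set.mem_univ z)
    exact ⟨A, hA, exists_finset_pi_subset_of_isOpen (hα.1 A hA) hzA⟩
  choose A hA I u hu hsub using hloc
  let O (z : s) : Set s := Subtype.val ⁻¹' (I z : Set ℕ).pi (u z)
  have hO (z : s) : IsOpen (O z) :=
    (isOpen_set_pi (I z).finite_toSet fun k hk => (hu z k hk).1).preimage continuous_subtype_val
  obtain ⟨t, ht⟩ := isCompact_univ.elim_finite_subcover O hO
    fun z _ => Set.mem_iUnion.mpr ⟨z, fun k hk => (hu z k hk).2⟩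
  let N := (t.sup fun z => (I z).sup id) + 1
  have hlt : ∀ z ∈ t, ∀ k ∈ I z, k < N := fun z hz k hk => Nat.lt_succ_of_le <|
    (Finset.le_sup (f := id) hk).trans (Finset.le_sup (f := fun z => (I z).sup id) hz)
  let C (z : s) : Set (Fin N → X) := Set.pi {i : Fin N | ↑i ∈ I z} fun i => u z i
  have hCO : ∀ z ∈ t, (fun w : s => w.1 ∘ Fin.val) ⁻¹' C z = O z := fun z hz => by
    simp only [O, pi_finset_eq_preimage_comp_val (hlt z hz), C]
    rfl
  refine ⟨N, t.image C, ?_, fun w => ?_, ?_⟩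
  · simp only [Finset.mem_image, forall_exists_index, and_imp, forall_apply_eq_imp_iff₂]
    exact fun z _ => isOpen_set_pi (Set.toFinite _) fun i hi => (hu z i hi).1
  · obtain ⟨z, hz, hwz⟩ := Set.mem_iUnion₂.mp (ht (Set.mem_univ w))
    exact ⟨C z, Finset.mem_image_of_mem C hz, (Set.ext_iff.mp (hCO z hz) w).mpr hwz⟩
  · simp only [Refines, Finset.image_image, Finset.mem_image, forall_exists_index, and_imp,
      forall_apply_eq_imp_iff₂]
    exact fun z hz => ⟨A z, hA z, (hCO z hz).trans_subset (hsub z)⟩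

end Cylinders

section NaturalExtension

variable {X : Type*}

theorem natExtSet_isClosed [TopologicalSpace X] [T2Space X] {T : X → X} (hT : Continuous T) :
    IsClosed (natExtSet T) := by
  simp only [natExtSet, Set.ofPred_forall]
  exact isClosed_iInter fun k => isClosed_eq (by fun_prop) (by fun_prop)

theorem iterate_apply_of_mem_natExtSet {T : X → X} {z : ℕ → X} (hz : z ∈ natExtSet T)
    (k m : ℕ) : T^[m] (z (k + m)) = z k := by
  induction m with
  | zero => rfl
  | succ m ih => rw [Function.iterate_succ_apply, ← Nat.add_assoc, hz (k + m), ih]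

theorem iterate_apply_R_of_mem_natExtSet {Y : Type*} {R : X → Y} {S : Y → X} {z : ℕ → X}
    (hz : z ∈ natExtSet (S ∘ R)) {N : ℕ} (i : Fin N) :
    (S ∘ R)^[N - 1 - i] (S (R (z N))) = z i := by
  have hN : N = i + (N - 1 - i) + 1 := by omega
  calc (S ∘ R)^[N - 1 - i] (S (R (z N)))
      = (S ∘ R)^[N - 1 - i] ((S ∘ R) (z (i + (N - 1 - i) + 1))) := by rw [← hN]; rfl
    _ = z i := by rw [hz]; exact iterate_apply_of_mem_natExtSet hz _ _

end NaturalExtension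

theorem covDim_natExt_le_of_factor_general {X Y : Type*} [TopologicalSpace X] [CompactSpace X]
    [TopologicalSpace.MetrizableSpace X] [MetricSpace Y]
    (R : X → Y) (S : Y → X) (hR : Continuous R) (hS : Continuous S) :
    covDim ↥(natExtSet (S ∘ R)) ≤ covDim Y := by
  rcases isEmpty_or_nonempty (natExtSet (S ∘ R)) with hZ | hZ
  · rw [covDim_eq_zero_of_isEmpty]
    exact zero_le
  have : CompactSpace (natExtSet (S ∘ R)) :=
    isCompact_iff_compactSpace.mp (natExtSet_isClosed (hS.comp hR)).isCompact
  refine covDim_le_of_forall_preimage_refines fun α hα => ?_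
  obtain ⟨N, γ, hγ, hcov, hγα⟩ := exists_refines_preimage_comp_val hα
  let f (z : natExtSet (S ∘ R)) : Y := R (z.1 N)
  let g (y : Y) (i : Fin N) : X := (S ∘ R)^[N - 1 - i] (S y)
  have hf : Continuous f := hR.comp ((continuous_apply N).comp continuous_subtype_val)
  have hg : Continuous g := continuous_pi fun i => ((hS.comp hR).iterate _).comp hS
  have hgf : g ∘ f = fun z => z.1 ∘ Fin.val :=
    funext fun z => funext (iterate_apply_R_of_mem_natExtSet z.2)
  exact ⟨f, hf, exists_isFinOpenCover_preimage_refines hf hg hα.nonempty hγ (hgf ▸ hcov)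
    (hgf ▸ hγα)⟩

/-- if `T = S ∘ R` with `R : X → Y`, `S : Y → X` continuous surjections and
`Y` a compact metric space, then `dim(X̃_T) ≤ dim Y`. -/
theorem covDim_natExt_le_of_factor {X Y : Type*} [TopologicalSpace X] [CompactSpace X]
    [TopologicalSpace.MetrizableSpace X] [MetricSpace Y] [CompactSpace Y]
    (R : X → Y) (S : Y → X) (hR : Continuous R) (hS : Continuous S)
    (hRs : Function.Surjective R) (hSs : Function.Surjective S) :
    covDim ↥(natExtSet (S ∘ R)) ≤ covDim Y :=
  covDim_natExt_le_of_factor_general R S hR hS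
end

section
/- Let (X,T) be a topological dynamical system with closed subsets Y, Z of X such that X = Y ∪ Z and T(Z) ⊆ Z. Then dim(X̃_T) ≤ max(dim Y, dim(⋂_{n∈ℕ} T^n Z)). -/
open scoped ENNReal Classical

/-!
Every finite open cover of `X̃_T` is refined by the pull-back, under a single coordinate
projection `π_n`, of a finite open family `γ` of `X`. Since `dim W ≤ d` for `W = ⋂ Tⁿ Z`, the
family `γ` can be shrunk to one of order `≤ d + 1` on a neighbourhood of `W` (a closed cover of
order `≤ d + 1` of a closed subset of a compact metric space keeps its order after a small
thickening); by compactness that neighbourhood contains some `Tʲ Z`. Pulling back by `Tʲ` to the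
coordinate `n + j` and shrinking once more, now using `dim Y ≤ d`, gives a family of order
`≤ d + 1` at the points of `Y`, and also at the points of `Z`, because `x_{n+j} ∈ Z` forces
`x_n ∈ Tʲ Z`. Its pull-back to `X̃_T` refines the given cover.
-/

open Set Filter Topology
open scoped Finset

theorem ENNReal.natCast_floor_toReal_le {r : ℝ≥0∞} (hr : r ≠ ⊤) : (⌊r.toReal⌋₊ : ℝ≥0∞) ≤ r := by
  have := ENNReal.ofReal_le_ofReal (Nat.floor_le (ENNReal.toReal_nonneg (a := r)))
  rwa [ENNReal.ofReal_natCast, ENNReal.ofReal_toReal hr] at this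

section Covers

variable {A : Type*}

theorem ordCover_le_iff {β : Finset (Set A)} {d : ℕ} :
    ordCover β ≤ d ↔ ∀ x, #{B ∈ β | x ∈ B} ≤ d + 1 := by
  have hbdd : BddAbove (range fun x : A => #{B ∈ β | x ∈ B}) :=
    ⟨#β, forall_mem_range.2 fun _ => Finset.card_filter_le _ _⟩
  rw [ordCover, Nat.sub_le_iff_le_add, ciSup_le_iff' hbdd]

theorem refines_image_of_forall_subset {ι : Type*} [Fintype ι] {U : ι → Set A}
    {α : Finset (Set A)} (h : ∀ i, ∃ A ∈ α, U i ⊆ A) : Refines (Finset.univ.image U) α := by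
  simpa [Refines] using h

theorem ordCover_image_le {ι : Type*} [Fintype ι] {U : ι → Set A} {d : ℕ}
    (h : ∀ x, #{i | x ∈ U i} ≤ d + 1) : ordCover (Finset.univ.image U) ≤ d := by
  refine ordCover_le_iff.2 fun x => ?_
  rw [Finset.filter_image]
  exact Finset.card_image_le.trans (h x)

variable [TopologicalSpace A]

theorem isFinOpenCover_image {ι : Type*} [Fintype ι] {U : ι → Set A} (hU : ∀ i, IsOpen (U i))
    (hcov : ⋃ i, U i = univ) : IsFinOpenCover (Finset.univ.image U) := by
  simpa [IsFinOpenCover, sUnion_image] using ⟨hU, hcov⟩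

theorem covDim_le_natCast_iff {d : ℕ} :
    covDim A ≤ d ↔ ∀ α : Finset (Set A), IsFinOpenCover α →
      ∃ β, IsFinOpenCover β ∧ Refines β α ∧ ordCover β ≤ d := by
  simp only [covDim, iSup₂_le_iff, Nat.cast_le]
  refine forall₂_congr fun α hα => ⟨fun h => ?_, ?_⟩
  · have hne :
        {n | ∃ β : Finset (Set A), IsFinOpenCover β ∧ Refines β α ∧ ordCover β = n}.Nonempty :=
      ⟨ordCover α, α, hα, fun B hB => ⟨B, hB, subset_rfl⟩, rfl⟩
    obtain ⟨β, hβ, hβα, hord⟩ := Nat.sInf_mem hne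
    exact ⟨β, hβ, hβα, hord.trans_le h⟩
  · rintro ⟨β, hβ, hβα, hord⟩
    exact (Nat.sInf_le (s := {n | ∃ β, IsFinOpenCover β ∧ Refines β α ∧ ordCover β = n})
      ⟨β, hβ, hβα, rfl⟩).trans hord

theorem covDim_le_natCast_floor {r : ℝ≥0∞} (hr : r ≠ ⊤) (h : covDim A ≤ r) :
    covDim A ≤ ⌊r.toReal⌋₊ :=
  iSup₂_le fun α hα => Nat.cast_le.2 <| Nat.le_floor <| by
    simpa using (ENNReal.toReal_le_toReal (ENNReal.natCast_ne_top _) hr).2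
      ((le_iSup₂ (f := fun α (_ : IsFinOpenCover α) => (Dcover α : ℝ≥0∞)) α hα).trans h)

end Covers

section Refinement

variable {A : Type*} [TopologicalSpace A] {d : ℕ} {ι : Type*} [Fintype ι] {U : ι → Set A}

theorem exists_open_refinement_of_covDim_le (hd : covDim A ≤ d) (hU : ∀ i, IsOpen (U i))
    (hcov : ⋃ i, U i = univ) :
    ∃ V : ι → Set A, (∀ i, IsOpen (V i)) ∧ (∀ i, V i ⊆ U i) ∧ ⋃ i, V i = univ ∧
      ∀ x, #{i | x ∈ V i} ≤ d + 1 := by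
  cases isEmpty_or_nonempty ι
  · exact ⟨U, hU, fun _ => subset_rfl, hcov, fun x => by simp⟩
  obtain ⟨β, ⟨hβo, hβcov⟩, hβU, hord⟩ :=
    covDim_le_natCast_iff.1 hd _ (isFinOpenCover_image hU hcov)
  have : ∀ B ∈ β, ∃ i, B ⊆ U i := fun B hB => by
    obtain ⟨_, hA, hBA⟩ := hβU B hB
    obtain ⟨i, -, rfl⟩ := Finset.mem_image.1 hA
    exact ⟨i, hBA⟩
  choose! idx hidx using this
  refine ⟨fun i => ⋃ B ∈ β.filter (idx · = i), B,
    fun i => isOpen_biUnion fun B hB => hβo B (Finset.mem_filter.1 hB).1,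
    fun i => iUnion₂_subset fun B hB =>
      (Finset.mem_filter.1 hB).2 ▸ hidx B (Finset.mem_filter.1 hB).1,
    eq_univ_of_forall fun x => ?_, fun x => ?_⟩
  · obtain ⟨B, hB, hxB⟩ := mem_sUnion.1 (hβcov.symm ▸ mem_univ x)
    exact mem_iUnion.2 ⟨idx B, mem_biUnion (Finset.mem_filter.2 ⟨hB, rfl⟩) hxB⟩
  · have hsurj :
        ({i | x ∈ ⋃ B ∈ β.filter (idx · = i), B} : Finset ι) ⊆ {B ∈ β | x ∈ B}.image idx := by
      intro i hi
      obtain ⟨B, hB, hxB⟩ := mem_iUnion₂.1 (Finset.mem_filter.1 hi).2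
      obtain ⟨hBβ, rfl⟩ := Finset.mem_filter.1 hB
      exact Finset.mem_image_of_mem idx (Finset.mem_filter.2 ⟨hBβ, hxB⟩)
    exact (Finset.card_le_card hsurj).trans <|
      Finset.card_image_le.trans (ordCover_le_iff.1 hord x)

theorem exists_closed_refinement_of_covDim_le [NormalSpace A] (hd : covDim A ≤ d)
    (hU : ∀ i, IsOpen (U i)) (hcov : ⋃ i, U i = univ) :
    ∃ E : ι → Set A, (∀ i, IsClosed (E i)) ∧ (∀ i, E i ⊆ U i) ∧ ⋃ i, E i = univ ∧
      ∀ x, #{i | x ∈ E i} ≤ d + 1 := by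
  obtain ⟨V, hVo, hVU, hVcov, hVcard⟩ := exists_open_refinement_of_covDim_le hd hU hcov
  obtain ⟨E, hEcov, hEc, hEV⟩ := exists_iUnion_eq_closed_subset hVo (fun _ => toFinite _) hVcov
  exact ⟨E, hEc, fun i => (hEV i).trans (hVU i), hEcov, fun x =>
    (Finset.card_le_card (Finset.monotone_filter_right _ fun i _ => @hEV i x)).trans (hVcard x)⟩

end Refinement

section Thickening

open Metric

variable {X : Type*} [MetricSpace X] [CompactSpace X] {ι : Type*} {E : ι → Set X}

theorem eventually_iInter_thickening_eq_empty (hE : ∀ i, IsClosed (E i)) {t : Finset ι}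
    (h : ⋂ i ∈ t, E i = ∅) : ∀ᶠ ε in 𝓝[>] 0, ⋂ i ∈ t, thickening ε (E i) = ∅ := by
  have hmono : Monotone fun δ : Ioi (0 : ℝ) => ⋂ i ∈ t, cthickening δ (E i) :=
    fun δ δ' hδ => iInter₂_mono fun i _ => cthickening_mono hδ _
  have hinter : univ ∩ ⋂ δ : Ioi (0 : ℝ), ⋂ i ∈ t, cthickening δ (E i) = ∅ := by
    rw [univ_inter, ← h]
    ext x
    have hcl : ∀ i, x ∈ E i ↔ ∀ δ : Ioi (0 : ℝ), x ∈ cthickening δ (E i) := fun i => by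
      simpa only [(hE i).closure_eq, mem_iInter, Subtype.forall, mem_Ioi] using
        Set.ext_iff.1 (closure_eq_iInter_cthickening (E i)) x
    simp only [mem_iInter, hcl]
    exact ⟨fun h i hi δ => h δ i hi, fun h δ i hi => h i hi δ⟩
  obtain ⟨δ, hδ⟩ := isCompact_univ.elim_directed_family_closed _
    (fun δ => isClosed_biInter fun i _ => isClosed_cthickening) hinter hmono.directed_ge
  filter_upwards [Ioo_mem_nhdsGT δ.2] with ε hε
  rw [univ_inter] at hδ
  exact subset_empty_iff.1 <| (iInter₂_mono fun i _ =>
    thickening_subset_cthickening_of_le hε.2.le _).trans hδ.subset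

theorem exists_pos_card_thickening_le [Fintype ι] (hE : ∀ i, IsClosed (E i)) {m : ℕ}
    (h : ∀ x, #{i | x ∈ E i} ≤ m) : ∃ ε > 0, ∀ x, #{i | x ∈ thickening ε (E i)} ≤ m := by
  have hempty (t : Finset ι) (ht : m < #t) : ⋂ i ∈ t, E i = ∅ :=
    eq_empty_of_forall_notMem fun x hx => (h x).not_gt <| ht.trans_le <|
      Finset.card_le_card fun i hi =>
        Finset.mem_filter.2 ⟨Finset.mem_univ i, mem_iInter₂.1 hx i hi⟩
  have hev : ∀ᶠ ε in 𝓝[>] 0, ∀ t : Finset ι, m < #t → ⋂ i ∈ t, thickening ε (E i) = ∅ :=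
    eventually_all.2 fun t => by
      by_cases ht : m < #t
      · filter_upwards [eventually_iInter_thickening_eq_empty hE (hempty t ht)] with ε hε
        exact fun _ => hε
      · exact .of_forall fun _ h => absurd h ht
  obtain ⟨ε, hε, hεpos⟩ := (hev.and self_mem_nhdsWithin).exists
  refine ⟨ε, hεpos, fun x => not_lt.1 fun hlt => ?_⟩
  have hx : x ∈ ⋂ i ∈ ({i | x ∈ thickening ε (E i)} : Finset ι), thickening ε (E i) :=
    mem_iInter₂.2 fun i hi => (Finset.mem_filter.1 hi).2
  rw [hε _ hlt] at hx
  exact hx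

end Thickening

section Shrinking

open Metric

variable {X : Type*} [MetricSpace X] [CompactSpace X] {C : Set X} {d : ℕ}
  {ι : Type*} [Fintype ι] {U : ι → Set X}

theorem exists_shrinking_card_le_near (hC : IsClosed C) (hd : covDim C ≤ d)
    (hU : ∀ i, IsOpen (U i)) (hcov : ⋃ i, U i = univ) :
    ∃ R : ι → Set X, (∀ i, IsOpen (R i)) ∧ (∀ i, R i ⊆ U i) ∧ ⋃ i, R i = univ ∧
      ∃ V, IsOpen V ∧ C ⊆ V ∧ ∀ x ∈ V, #{i | x ∈ R i} ≤ d + 1 := by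
  have : CompactSpace C := isCompact_iff_compactSpace.1 hC.isCompact
  obtain ⟨E, hEc, hEU, hEcov, hEcard⟩ := exists_closed_refinement_of_covDim_le hd
    (U := fun i => ((↑) : C → X) ⁻¹' U i) (fun i => (hU i).preimage continuous_subtype_val)
    (by rw [← preimage_iUnion, hcov, preimage_univ])
  set F : ι → Set X := fun i => ((↑) : C → X) '' E i
  have hFc (i : ι) : IsClosed (F i) := hC.isClosedEmbedding_subtypeVal.isClosedMap _ (hEc i)
  have hFcard (x : X) : #{i | x ∈ F i} ≤ d + 1 := by
    by_cases hx : x ∈ C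
    · simpa [F, hx] using hEcard ⟨x, hx⟩
    · simp [F, hx]
  obtain ⟨ε, hε, hεcard⟩ := exists_pos_card_thickening_le hFc hFcard
  set V : ι → Set X := fun i => thickening ε (F i) ∩ U i
  have hVo (i : ι) : IsOpen (V i) := isOpen_thickening.inter (hU i)
  have hCV : C ⊆ ⋃ i, V i := fun x hx => by
    obtain ⟨i, hi⟩ := mem_iUnion.1 (hEcov.symm ▸ mem_univ (⟨x, hx⟩ : C))
    exact mem_iUnion.2 ⟨i, self_subset_thickening hε _ ⟨_, hi, rfl⟩, hEU i hi⟩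
  obtain ⟨W, hWo, hCW, hWV⟩ := normal_exists_closure_subset hC (isOpen_iUnion hVo) hCV
  refine ⟨fun i => V i ∪ (U i \ closure W), fun i => (hVo i).union ((hU i).sdiff isClosed_closure),
    fun i => union_subset inter_subset_right sdiff_subset, eq_univ_of_forall fun x => ?_,
    W, hWo, hCW, fun x hx => ?_⟩
  · by_cases hx : x ∈ closure W
    · obtain ⟨i, hi⟩ := mem_iUnion.1 (hWV hx)
      exact mem_iUnion.2 ⟨i, .inl hi⟩
    · obtain ⟨i, hi⟩ := mem_iUnion.1 (hcov.symm ▸ mem_univ x)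
      exact mem_iUnion.2 ⟨i, .inr ⟨hi, hx⟩⟩
  · refine (Finset.card_le_card fun i hi => ?_).trans (hεcard x)
    simp only [Finset.mem_filter, Finset.mem_univ, true_and] at hi ⊢
    exact hi.elim (·.1) fun h => absurd (subset_closure hx) h.2

theorem exists_shrinking_card_le_near_of_subset {K : Set X} (hK : IsClosed K) (hC : IsClosed C)
    (hd : covDim C ≤ d) (hU : ∀ i, IsOpen (U i)) (hKU : K ⊆ ⋃ i, U i) :
    ∃ R : ι → Set X, (∀ i, IsOpen (R i)) ∧ (∀ i, R i ⊆ U i) ∧ K ⊆ ⋃ i, R i ∧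
      ∃ V, IsOpen V ∧ C ⊆ V ∧ ∀ x ∈ V, #{i | x ∈ R i} ≤ d + 1 := by
  obtain ⟨R, hRo, hRU, hRcov, V, hVo, hCV, hRcard⟩ := exists_shrinking_card_le_near hC hd
    (U := fun o : Option ι => o.elim Kᶜ U) (by rintro (_ | i); exacts [hK.isOpen_compl, hU i])
    (eq_univ_of_forall fun x => by
      by_cases hx : x ∈ K
      · obtain ⟨i, hi⟩ := mem_iUnion.1 (hKU hx)
        exact mem_iUnion.2 ⟨some i, hi⟩
      · exact mem_iUnion.2 ⟨none, hx⟩)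
  refine ⟨R ∘ some, fun i => hRo _, fun i => hRU _, fun x hx => ?_, V, hVo, hCV, fun x hx => ?_⟩
  · obtain ⟨_ | i, hi⟩ := mem_iUnion.1 (hRcov.symm ▸ mem_univ x)
    exacts [absurd hx (hRU none hi), mem_iUnion.2 ⟨i, hi⟩]
  · refine le_trans ?_ (hRcard x hx)
    exact Finset.card_le_card_of_injOn some (fun i hi => by simpa using hi)
      (Option.some_injective _).injOn

end Shrinking

theorem exists_iterate_image_subset {X : Type*} [TopologicalSpace X] [CompactSpace X] [T2Space X]
    {T : X → X} (hT : Continuous T) {Z : Set X} (hZ : IsClosed Z) (hTZ : T '' Z ⊆ Z)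
    {V : Set X} (hV : IsOpen V) (h : ⋂ n, T^[n] '' Z ⊆ V) : ∃ j, T^[j] '' Z ⊆ V := by
  have hanti : Antitone fun n => T^[n] '' Z := antitone_nat_of_succ_le fun n => by
    rw [Function.iterate_succ, image_comp]
    exact image_mono hTZ
  obtain ⟨j, hj⟩ := hV.isClosed_compl.isCompact.elim_directed_family_closed _
    (fun n => (hZ.isCompact.image (hT.iterate n)).isClosed)
    (by rwa [← sdiff_eq_compl_inter, sdiff_eq_empty]) hanti.directed_ge
  exact ⟨j, by rwa [← sdiff_eq_compl_inter, sdiff_eq_empty] at hj⟩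

section NaturalExtension

variable {X : Type*} {T : X → X}

def natExtProj (T : X → X) (n : ℕ) : natExtSet T → X := fun x => x.1 n

theorem iterate_natExtProj {m n : ℕ} (h : m ≤ n) (x : natExtSet T) :
    T^[n - m] (natExtProj T n x) = natExtProj T m x := by
  obtain ⟨k, rfl⟩ := Nat.exists_eq_add_of_le h
  rw [Nat.add_sub_cancel_left]
  clear h
  induction k with
  | zero => rfl
  | succ k ih => rw [Function.iterate_succ_apply, ← add_assoc, natExtProj, x.2 (m + k)]; exact ih

theorem iterate_comp_natExtProj {m n : ℕ} (h : m ≤ n) :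
    T^[n - m] ∘ natExtProj T n = natExtProj T m :=
  funext (iterate_natExtProj h)

variable [TopologicalSpace X]

theorem continuous_natExtProj (n : ℕ) : Continuous (natExtProj T n) :=
  (continuous_apply n).comp continuous_subtype_val

theorem isClosed_natExtSet [T2Space X] (hT : Continuous T) : IsClosed (natExtSet T) := by
  simp only [natExtSet, ofPred_forall]
  exact isClosed_iInter fun k => isClosed_eq (hT.comp (continuous_apply _)) (continuous_apply _)

theorem compactSpace_natExtSet [CompactSpace X] [T2Space X] (hT : Continuous T) :
    CompactSpace (natExtSet T) :=
  isCompact_iff_compactSpace.1 (isClosed_natExtSet hT).isCompact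

theorem isClosed_range_natExtProj [CompactSpace X] [T2Space X] (hT : Continuous T) (n : ℕ) :
    IsClosed (range (natExtProj T n)) :=
  have := compactSpace_natExtSet hT
  (isCompact_range (continuous_natExtProj n)).isClosed

theorem nhds_natExtSet (x : natExtSet T) :
    𝓝 x = ⨅ n, comap (natExtProj T n) (𝓝 (natExtProj T n x)) := by
  rw [nhds_subtype, nhds_pi, Filter.pi, comap_iInf]
  simp only [comap_comap]
  rfl

theorem antitone_comap_natExtProj (hT : Continuous T) (x : natExtSet T) :
    Antitone fun n => comap (natExtProj T n) (𝓝 (natExtProj T n x)) := fun m n h =>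
  calc comap (natExtProj T n) (𝓝 (natExtProj T n x))
      ≤ comap (natExtProj T n) (comap T^[n - m] (𝓝 (T^[n - m] (natExtProj T n x)))) :=
        comap_mono ((hT.iterate _).tendsto _).le_comap
    _ = comap (natExtProj T m) (𝓝 (natExtProj T m x)) := by
        rw [comap_comap, iterate_comp_natExtProj h, iterate_natExtProj h]

theorem exists_isOpen_preimage_natExtProj_subset (hT : Continuous T) {x : natExtSet T}
    {A : Set (natExtSet T)} (hA : A ∈ 𝓝 x) :
    ∃ n G, IsOpen G ∧ natExtProj T n x ∈ G ∧ natExtProj T n ⁻¹' G ⊆ A := by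
  rw [nhds_natExtSet, mem_iInf_of_directed (antitone_comap_natExtProj hT x).directed_ge] at hA
  obtain ⟨n, G', hG', hG'A⟩ := hA
  obtain ⟨G, hGG', hGo, hxG⟩ := mem_nhds_iff.1 hG'
  exact ⟨n, G, hGo, hxG, (preimage_mono hGG').trans hG'A⟩

theorem exists_natExtProj_refinement [CompactSpace X] [T2Space X] (hT : Continuous T)
    {α : Finset (Set (natExtSet T))} (hα : IsFinOpenCover α) :
    ∃ n, ∃ γ : Finset (Set X), (∀ G ∈ γ, IsOpen G) ∧ range (natExtProj T n) ⊆ ⋃₀ γ ∧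
      ∀ G ∈ γ, ∃ A ∈ α, natExtProj T n ⁻¹' G ⊆ A := by
  have := compactSpace_natExtSet hT
  have hloc (x : natExtSet T) :
      ∃ n G, IsOpen G ∧ natExtProj T n x ∈ G ∧ ∃ A ∈ α, natExtProj T n ⁻¹' G ⊆ A := by
    obtain ⟨A, hA, hxA⟩ := mem_sUnion.1 (hα.2.symm ▸ mem_univ x)
    obtain ⟨n, G, hGo, hxG, hGA⟩ :=
      exists_isOpen_preimage_natExtProj_subset hT ((hα.1 A hA).mem_nhds hxA)
    exact ⟨n, G, hGo, hxG, A, hA, hGA⟩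
  choose m G hGo hxG hGα using hloc
  obtain ⟨t, ht⟩ := isCompact_univ.elim_finite_subcover (fun x => natExtProj T (m x) ⁻¹' G x)
    (fun x => (hGo x).preimage (continuous_natExtProj _)) fun x _ => mem_iUnion.2 ⟨x, hxG x⟩
  set n := t.sup m
  have hpre {x} (hx : x ∈ t) :
      natExtProj T n ⁻¹' (T^[n - m x] ⁻¹' G x) = natExtProj T (m x) ⁻¹' G x := by
    rw [← preimage_comp, iterate_comp_natExtProj (Finset.le_sup hx)]
  refine ⟨n, t.image fun x => T^[n - m x] ⁻¹' G x, ?_, ?_, ?_⟩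
  · simp only [Finset.mem_image]
    rintro _ ⟨x, -, rfl⟩
    exact (hGo x).preimage (hT.iterate _)
  · rintro _ ⟨y, rfl⟩
    obtain ⟨x, hx, hyx⟩ := mem_iUnion₂.1 (ht (mem_univ y))
    refine ⟨_, Finset.mem_image_of_mem _ hx, ?_⟩
    rwa [← mem_preimage, hpre hx]
  · simp only [Finset.mem_image]
    rintro _ ⟨x, hx, rfl⟩
    obtain ⟨A, hA, hGA⟩ := hGα x
    exact ⟨A, hA, (hpre hx).trans_subset hGA⟩

end NaturalExtension

theorem covDim_natExtSet_le_natCast {X : Type*} [MetricSpace X] [CompactSpace X] {T : X → X}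
    (hT : Continuous T) {Y Z : Set X} (hYc : IsClosed Y) (hZc : IsClosed Z)
    (hcov : Y ∪ Z = univ) (hTZ : T '' Z ⊆ Z) {d : ℕ} (hY : covDim Y ≤ d)
    (hW : covDim ↥(⋂ n, T^[n] '' Z) ≤ d) : covDim (natExtSet T) ≤ d := by
  refine covDim_le_natCast_iff.2 fun α hα => ?_
  obtain ⟨n, γ, hγo, hγcov, hγα⟩ := exists_natExtProj_refinement hT hα
  have hWc : IsClosed (⋂ n, T^[n] '' Z) :=
    isClosed_iInter fun n => (hZc.isCompact.image (hT.iterate n)).isClosed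
  obtain ⟨R, hRo, hRγ, hRcov, V₀, hV₀o, hWV₀, hRcard⟩ :=
    exists_shrinking_card_le_near_of_subset (isClosed_range_natExtProj hT n) hWc hW
      (U := ((↑) : γ → Set X)) (fun G => hγo G G.2) fun x hx => by
        obtain ⟨G, hG, hxG⟩ := hγcov hx
        exact mem_iUnion.2 ⟨⟨G, hG⟩, hxG⟩
  obtain ⟨j, hj⟩ := exists_iterate_image_subset hT hZc hTZ hV₀o hWV₀
  -- at level `n + j`, points of `Z` project into `V₀`; a second shrinking takes care of `Y`
  have hproj (x : natExtSet T) : T^[j] (natExtProj T (n + j) x) = natExtProj T n x := by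
    simpa using iterate_natExtProj (Nat.le_add_right n j) x
  obtain ⟨S, hSo, hSR, hScov, V₁, hV₁o, hYV₁, hScard⟩ :=
    exists_shrinking_card_le_near_of_subset (isClosed_range_natExtProj hT (n + j)) hYc hY
      (U := fun G => T^[j] ⁻¹' R G) (fun G => (hRo G).preimage (hT.iterate j))
      (range_subset_iff.2 fun x => by simpa [hproj] using hRcov (mem_range_self x))
  refine ⟨Finset.univ.image fun G => natExtProj T (n + j) ⁻¹' S G,
    isFinOpenCover_image (fun G => (hSo G).preimage (continuous_natExtProj _))
      (by simpa [← preimage_iUnion, eq_univ_iff_forall] using fun x => hScov (mem_range_self x)),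
    refines_image_of_forall_subset fun G => ?_, ordCover_image_le fun x => ?_⟩
  · obtain ⟨A, hA, hGA⟩ := hγα G G.2
    refine ⟨A, hA, fun x hx => hGA ?_⟩
    simpa [hproj] using hRγ G (hSR G hx)
  · rcases hcov ▸ mem_univ (natExtProj T (n + j) x) with hxY | hxZ
    · exact hScard _ (hYV₁ hxY)
    · refine (Finset.card_le_card fun G hG => ?_).trans (hRcard _ (hj ⟨_, hxZ, hproj x⟩))
      simp only [Finset.mem_filter, Finset.mem_univ, true_and] at hG ⊢
      simpa [hproj] using hSR G hG

/-- if `X = Y ∪ Z` with `Y, Z` closed and `T(Z) ⊆ Z`, then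
`dim(X̃_T) ≤ max(dim Y, dim(⋂_n T^n Z))`. -/
theorem covDim_natExt_le_max {X : Type*} [TopologicalSpace X] [CompactSpace X]
    [TopologicalSpace.MetrizableSpace X] (T : X → X) (hT : Continuous T)
    (Y Z : Set X) (hYc : IsClosed Y) (hZc : IsClosed Z) (hcov : Y ∪ Z = Set.univ)
    (hTZ : T '' Z ⊆ Z) :
    covDim ↥(natExtSet T) ≤ max (covDim ↥Y) (covDim ↥(⋂ n : ℕ, T^[n] '' Z)) := by
  let := TopologicalSpace.metrizableSpaceMetric X
  set r := max (covDim ↥Y) (covDim ↥(⋂ n : ℕ, T^[n] '' Z))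
  rcases eq_or_ne r ⊤ with hr | hr
  · exact hr ▸ le_top
  exact (covDim_natExtSet_le_natCast hT hYc hZc hcov hTZ
    (covDim_le_natCast_floor hr (le_max_left _ _))
    (covDim_le_natCast_floor hr (le_max_right _ _))).trans (ENNReal.natCast_floor_toReal_le hr)
end
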